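/- Let A = M_n(ℂ) act on H = M_n(ℂ) (with the Hilbert–Schmidt inner product ⟨x,y⟩ = Tr(x*y)) by left multiplication, let J(x) := x*, and for a selfadjoint d ∈ M_n(ℂ) define D(x) := dxd. Then D satisfies the first order condition [[D,a], Jb*J⁻¹] = 0 for all a,b ∈ A if and only if d is a scalar multiple of the identity; in particular, in the canonical decomposition D_R = D, and the spectral triple (A,H,D,J) fails the first order condition whenever d is not central. -/

import Mathlib

open scoped ComplexConjugate

/-- The Hilbert space `M_n(ℂ)` with the Hilbert–Schmidt inner product
`⟨x,y⟩ = Tr(x*y)`, realized as `ℂ^{n×n}` with the standard inner product. -/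
abbrev MatH (n : ℕ) := EuclideanSpace ℂ (Fin n × Fin n)

/-- Left multiplication by the matrix `a` on `M_n(ℂ)`. -/
noncomputable def lmul (n : ℕ) (a : Matrix (Fin n) (Fin n) ℂ) : MatH n →ₗ[ℂ] MatH n where
  toFun x := WithLp.toLp 2 (fun p => ∑ j, a p.1 j * x (j, p.2))
  map_add' x y := by
    ext p
    simp [Finset.sum_add_distrib, mul_add]
  map_smul' c x := by
    ext p
    simp [Finset.mul_sum]
    try ring_nf
    try simp [mul_assoc, mul_comm, mul_left_comm]

/-- Right multiplication by the matrix `b` on `M_n(ℂ)`. -/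
noncomputable def rmul (n : ℕ) (b : Matrix (Fin n) (Fin n) ℂ) : MatH n →ₗ[ℂ] MatH n where
  toFun x := WithLp.toLp 2 (fun p => ∑ j, x (p.1, j) * b j p.2)
  map_add' x y := by
    ext p
    simp [Finset.sum_add_distrib, add_mul]
  map_smul' c x := by
    ext p
    simp [Finset.mul_sum]
    try ring_nf
    try simp [mul_assoc, mul_comm, mul_left_comm]

/-- The real structure `J(x) := x*` on `M_n(ℂ)`. -/
noncomputable def Jmat (n : ℕ) : MatH n ≃ₛₗ[starRingEnd ℂ] MatH n where
  toFun x := WithLp.toLp 2 (fun p => (starRingEnd ℂ) (x (p.2, p.1)))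
  invFun x := WithLp.toLp 2 (fun p => (starRingEnd ℂ) (x (p.2, p.1)))
  left_inv x := by ext p; simp
  right_inv x := by ext p; simp
  map_add' x y := by ext p; simp
  map_smul' c x := by ext p; simp

/-- For an antilinear isometry `J` and `ξ ∈ End(H)`, the operator `ξ° := J ξ* J⁻¹`. -/
noncomputable def sharp {n : ℕ} (J : MatH n ≃ₛₗ[starRingEnd ℂ] MatH n)
    (ξ : MatH n →ₗ[ℂ] MatH n) : MatH n →ₗ[ℂ] MatH n where
  toFun x := J (star ξ (J.symm x))
  map_add' x y := by simp
  map_smul' c x := by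
    show J (star ξ (J.symm (c • x))) = _
    rw [map_smulₛₗ, map_smul, map_smulₛₗ]; simp

/-- Conjugation `ξ ↦ J ξ J⁻¹` of an operator by the antilinear map `J`. -/
noncomputable def conjJ {n : ℕ} (J : MatH n ≃ₛₗ[starRingEnd ℂ] MatH n)
    (ξ : MatH n →ₗ[ℂ] MatH n) : MatH n →ₗ[ℂ] MatH n where
  toFun x := J (ξ (J.symm x))
  map_add' x y := by simp
  map_smul' c x := by
    show J (ξ (J.symm (c • x))) = _
    rw [map_smulₛₗ, map_smul, map_smulₛₗ]; simp

/-- The commutant of a subset of `End(H)`. -/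
def commutant {n : ℕ} (S : Set (MatH n →ₗ[ℂ] MatH n)) : Set (MatH n →ₗ[ℂ] MatH n) :=
  {η | ∀ ξ ∈ S, η * ξ = ξ * η}

/-- `Ω¹_D(A)`: the complex span of `{a[D,b] : a, b ∈ A}`. -/
noncomputable def omega1 {n : ℕ} (Aset : Set (MatH n →ₗ[ℂ] MatH n)) (D : MatH n →ₗ[ℂ] MatH n) :
    Submodule ℂ (MatH n →ₗ[ℂ] MatH n) :=
  Submodule.span ℂ {x | ∃ a ∈ Aset, ∃ b ∈ Aset, x = a * (D * b - b * D)}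

/-- `Cl_D(A)`: the complex `*`-subalgebra of `End(H)` generated by `A` and `Ω¹_D(A)`. -/
noncomputable def cliff {n : ℕ} (Aset : Set (MatH n →ₗ[ℂ] MatH n))
    (D : MatH n →ₗ[ℂ] MatH n) : StarSubalgebra ℂ (MatH n →ₗ[ℂ] MatH n) :=
  StarAlgebra.adjoin ℂ (Aset ∪ (omega1 Aset D : Set (MatH n →ₗ[ℂ] MatH n)))

/-- The algebra `A = M_n(ℂ)` acting on `H = M_n(ℂ)` by left multiplication. -/
def Amat (n : ℕ) : Set (MatH n →ₗ[ℂ] MatH n) := Set.range (lmul n)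

/-!
Under the identification of `M_n(ℂ)` with `ℂ^{n×n}`, left multiplication by `a` is the Kronecker
product `a ⊗ 1`, and `J b* J⁻¹` is right multiplication by `b`, i.e. `1 ⊗ bᵀ`. Hence
`[[D, a], J b* J⁻¹] = [d, a] ⊗ [b, d]ᵀ`, which vanishes iff one of the two commutators does.
Taking `a = b` shows that the first order condition forces `d` to commute with every matrix,
i.e. to be scalar.
-/

open Matrix
open scoped Kronecker

namespace Matrix

theorem kronecker_eq_zero_iff {R l m n p : Type*} [MulZeroClass R] [NoZeroDivisors R]
    {A : Matrix l m R} {B : Matrix n p R} : A ⊗ₖ B = 0 ↔ A = 0 ∨ B = 0 := by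
  refine ⟨fun h => ?_, ?_⟩
  · by_contra! hAB
    obtain ⟨⟨i, j, hA⟩, ⟨k, l, hB⟩⟩ : (∃ i j, A i j ≠ 0) ∧ ∃ k l, B k l ≠ 0 := by
      simpa [← Matrix.ext_iff] using hAB
    exact mul_ne_zero hA hB (by simpa using congrFun₂ h (i, k) (j, l))
  · rintro (rfl | rfl) <;> simp

theorem sub_kronecker {R l m n p : Type*} [NonUnitalNonAssocRing R] (A₁ A₂ : Matrix l m R)
    (B : Matrix n p R) : (A₁ - A₂) ⊗ₖ B = A₁ ⊗ₖ B - A₂ ⊗ₖ B := by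
  ext; simp [sub_mul]

theorem kronecker_sub {R l m n p : Type*} [NonUnitalNonAssocRing R] (A : Matrix l m R)
    (B₁ B₂ : Matrix n p R) : A ⊗ₖ (B₁ - B₂) = A ⊗ₖ B₁ - A ⊗ₖ B₂ := by
  ext; simp [mul_sub]

theorem exists_eq_smul_one_iff_forall_commute {R n : Type*} [CommSemiring R] [Fintype n]
    [DecidableEq n] {d : Matrix n n R} : (∃ c : R, d = c • 1) ↔ ∀ e, Commute d e := by
  refine ⟨?_, fun h => ?_⟩
  · rintro ⟨c, rfl⟩ e
    exact (Commute.one_left e).smul_left c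
  · obtain ⟨c, hc⟩ := mem_range_scalar_of_commute_single fun i j _ => (h _).symm
    exact ⟨c, by rw [← hc, scalar_apply, smul_one_eq_diagonal]⟩

theorem star_toLpLinAlgEquiv {𝕜 ι : Type*} [RCLike 𝕜] [Fintype ι] [DecidableEq ι]
    (A : Matrix ι ι 𝕜) : star (toLpLinAlgEquiv 2 A) = toLpLinAlgEquiv (n := ι) 2 Aᴴ := by
  rw [LinearMap.star_eq_adjoint]
  exact (toEuclideanLin_conjTranspose_eq_adjoint A).symm

end Matrix

theorem conjJ_one {n : ℕ} (J : MatH n ≃ₛₗ[starRingEnd ℂ] MatH n) : conjJ J 1 = 1 :=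
  LinearMap.ext J.apply_symm_apply

def FirstOrderCondition {n : ℕ} (A : Set (MatH n →ₗ[ℂ] MatH n))
    (J : MatH n ≃ₛₗ[starRingEnd ℂ] MatH n) (D : MatH n →ₗ[ℂ] MatH n) : Prop :=
  ∀ a ∈ A, ∀ b ∈ A, (D * a - a * D) * sharp J b = sharp J b * (D * a - a * D)

section
variable {n : ℕ}

theorem lmul_eq_toLpLinAlgEquiv (a : Matrix (Fin n) (Fin n) ℂ) :
    lmul n a = toLpLinAlgEquiv 2 (a ⊗ₖ 1) := by
  ext x p
  simp [lmul, mulVec, dotProduct, one_apply, Fintype.sum_prod_type]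

theorem rmul_eq_toLpLinAlgEquiv (b : Matrix (Fin n) (Fin n) ℂ) :
    rmul n b = toLpLinAlgEquiv 2 (1 ⊗ₖ bᵀ) := by
  ext x p
  simp [rmul, mulVec, dotProduct, one_apply, Fintype.sum_prod_type, mul_comm]

theorem star_lmul (b : Matrix (Fin n) (Fin n) ℂ) : star (lmul n b) = lmul n bᴴ := by
  rw [lmul_eq_toLpLinAlgEquiv, lmul_eq_toLpLinAlgEquiv, star_toLpLinAlgEquiv,
    conjTranspose_kronecker, conjTranspose_one]

theorem sharp_lmul (b : Matrix (Fin n) (Fin n) ℂ) : sharp (Jmat n) (lmul n b) = rmul n b := by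
  ext x p
  change starRingEnd ℂ ((star (lmul n b) ((Jmat n).symm x)) (p.2, p.1)) = _
  rw [star_lmul]
  simp [Jmat, lmul, rmul, mul_comm]

theorem doubleCommutator_eq_toLpLinAlgEquiv (d e f : Matrix (Fin n) (Fin n) ℂ) :
    (lmul n d * rmul n d * lmul n e - lmul n e * (lmul n d * rmul n d)) * rmul n f
        - rmul n f * (lmul n d * rmul n d * lmul n e - lmul n e * (lmul n d * rmul n d))
      = toLpLinAlgEquiv 2 ((d * e - e * d) ⊗ₖ (f * d - d * f)ᵀ) := by
  simp only [lmul_eq_toLpLinAlgEquiv, rmul_eq_toLpLinAlgEquiv, ← map_mul, ← map_sub]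
  congr 1
  simp only [← mul_kronecker_mul, mul_one, one_mul, ← sub_kronecker, ← kronecker_sub,
    transpose_sub, transpose_mul]

theorem firstOrderCondition_iff_forall_commute (d : Matrix (Fin n) (Fin n) ℂ) :
    FirstOrderCondition (Amat n) (Jmat n) (lmul n d * rmul n d) ↔ ∀ e, Commute d e := by
  have hpair (e f : Matrix (Fin n) (Fin n) ℂ) :
      (lmul n d * rmul n d * lmul n e - lmul n e * (lmul n d * rmul n d))
            * sharp (Jmat n) (lmul n f)
          = sharp (Jmat n) (lmul n f)
            * (lmul n d * rmul n d * lmul n e - lmul n e * (lmul n d * rmul n d))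
        ↔ Commute d e ∨ Commute f d := by
    rw [sharp_lmul, ← sub_eq_zero, doubleCommutator_eq_toLpLinAlgEquiv,
      map_eq_zero_iff _ (toLpLinAlgEquiv 2).injective, kronecker_eq_zero_iff, transpose_eq_zero,
      sub_eq_zero, sub_eq_zero, ← commute_iff_eq, ← commute_iff_eq]
  simp only [FirstOrderCondition, Amat, Set.forall_mem_range, hpair]
  exact ⟨fun h e => (h e e).elim id Commute.symm, fun h e _ => Or.inl (h e)⟩

end

theorem matrix_triple_product_firstOrder_general (n : ℕ) (d : Matrix (Fin n) (Fin n) ℂ) :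
    ((∀ a ∈ Amat n, ∀ b ∈ Amat n,
        (lmul n d * rmul n d * a - a * (lmul n d * rmul n d)) * sharp (Jmat n) b
          = sharp (Jmat n) b
              * (lmul n d * rmul n d * a - a * (lmul n d * rmul n d))) ↔
      ∃ c : ℂ, d = c • (1 : Matrix (Fin n) (Fin n) ℂ)) ∧
    ((∑ _i : Fin 1, ∑ _j : Fin 1,
        (1 : MatH n →ₗ[ℂ] MatH n) * conjJ (Jmat n) 1 * (lmul n d * rmul n d)
          * ((1 : MatH n →ₗ[ℂ] MatH n) * conjJ (Jmat n) 1))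
        = lmul n d * rmul n d) ∧
    ((¬ ∃ c : ℂ, d = c • (1 : Matrix (Fin n) (Fin n) ℂ)) →
      ¬ ∀ a ∈ Amat n, ∀ b ∈ Amat n,
        (lmul n d * rmul n d * a - a * (lmul n d * rmul n d)) * sharp (Jmat n) b
          = sharp (Jmat n) b
              * (lmul n d * rmul n d * a - a * (lmul n d * rmul n d))) := by
  have hfoc :
      FirstOrderCondition (Amat n) (Jmat n) (lmul n d * rmul n d) ↔ ∃ c : ℂ, d = c • 1 :=
    (firstOrderCondition_iff_forall_commute d).trans exists_eq_smul_one_iff_forall_commute.symm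
  exact ⟨hfoc, by simp [conjJ_one], fun hscalar hfoc' => hscalar (hfoc.1 hfoc')⟩

/-- For `A = M_n(ℂ)` acting by left multiplication on `H = M_n(ℂ)`,
`J(x) = x*` and `D(x) = dxd` with `d` selfadjoint: `D` satisfies the first order
condition iff `d` is a scalar multiple of the identity; in the canonical decomposition
(with `N = 1`, `P₁ = 1`) one has `D_R = D`; in particular the triple fails the first
order condition whenever `d` is not central. -/
theorem matrix_triple_product_firstOrder (n : ℕ) (d : Matrix (Fin n) (Fin n) ℂ)
    (hd : IsSelfAdjoint d) :
    ((∀ a ∈ Amat n, ∀ b ∈ Amat n,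
        (lmul n d * rmul n d * a - a * (lmul n d * rmul n d)) * sharp (Jmat n) b
          = sharp (Jmat n) b
              * (lmul n d * rmul n d * a - a * (lmul n d * rmul n d))) ↔
      ∃ c : ℂ, d = c • (1 : Matrix (Fin n) (Fin n) ℂ)) ∧
    ((∑ _i : Fin 1, ∑ _j : Fin 1,
        (1 : MatH n →ₗ[ℂ] MatH n) * conjJ (Jmat n) 1 * (lmul n d * rmul n d)
          * ((1 : MatH n →ₗ[ℂ] MatH n) * conjJ (Jmat n) 1))
        = lmul n d * rmul n d) ∧
    ((¬ ∃ c : ℂ, d = c • (1 : Matrix (Fin n) (Fin n) ℂ)) →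
      ¬ ∀ a ∈ Amat n, ∀ b ∈ Amat n,
        (lmul n d * rmul n d * a - a * (lmul n d * rmul n d)) * sharp (Jmat n) b
          = sharp (Jmat n) b
              * (lmul n d * rmul n d * a - a * (lmul n d * rmul n d))) :=
  matrix_triple_product_firstOrder_general n d
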